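/- There exists an absolute constant C > 0 with the following property: for every h > 0, every b = (b₁, b₂) ∈ ℝ² with b₁ > 0, and every function v : ℝ² → ℝ continuously differentiable on an open neighborhood of the closure of the square Q_h(b) = (b₁, b₁+h) × (b₂, b₂+h) and satisfying the weighted mean-zero condition ∫_{Q_h(b)} x₁ v dA = 0, one has ∫_{Q_h(b)} x₁ v² dA ≤ C · ((b₁+h)/b₁) · h² ∫_{Q_h(b)} x₁ |∇v|² dA, where dA denotes the two-dimensional Lebesgue measure. -/

import Mathlib

open MeasureTheory

/-- The open square `(b₁, b₁+h) × (b₂, b₂+h)`. -/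
def sqEl (b : ℝ × ℝ) (h : ℝ) : Set (ℝ × ℝ) :=
  Set.Ioo b.1 (b.1 + h) ×ˢ Set.Ioo b.2 (b.2 + h)

/-- Squared Euclidean norm of the gradient of a scalar field on `ℝ²`. -/
noncomputable def gradSq (v : ℝ × ℝ → ℝ) (x : ℝ × ℝ) : ℝ :=
  (fderiv ℝ v x (1, 0)) ^ 2 + (fderiv ℝ v x (0, 1)) ^ 2

/-!
Going from `x` to `y` through the corner `(x₁, y₂)`, the fundamental theorem of calculus and
Cauchy–Schwarz on each segment give `(v y - v x)² ≤ 2h (∫ |∂₁v|² along a row + ∫ |∂₂v|² along a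
column)`; integrating over `x, y ∈ Q` (Fubini) yields `∬ (v y - v x)² ≤ 2h⁴ ∫ |∇v|²`.
Orthogonality of `v` to constants in the `r`-weighted inner product makes `∫ r v²` the minimum of
`c ↦ ∫ r (v - c)²`. Taking `c = v x`, bounding the weight `r = x₁` by `b₁ + h` from above and by
`b₁` from below, and averaging over `x ∈ Q` gives the inequality with `C = 2`.
-/

open Set

section Generic

variable {α : Type*} [MeasurableSpace α] {μ : Measure α}

theorem sq_integral_le_measureReal_mul_integral_sq [IsFiniteMeasure μ] {f : α → ℝ}
    (hf : MemLp f 2 μ) :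
    (∫ x, f x ∂μ) ^ 2 ≤ μ.real univ * ∫ x, f x ^ 2 ∂μ := by
  rcases eq_zero_or_neZero μ with rfl | _
  · simp
  have hf1 : Integrable f μ := hf.integrable one_le_two
  have expand : ∫ x, (μ.real univ * f x - ∫ y, f y ∂μ) ^ 2 ∂μ
      = μ.real univ * (μ.real univ * ∫ x, f x ^ 2 ∂μ - (∫ x, f x ∂μ) ^ 2) := by
    simp_rw [sub_sq, mul_pow]
    have hf2 := hf.integrable_sq
    rw [integral_add (by fun_prop) (by fun_prop), integral_sub (by fun_prop) (by fun_prop),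
      integral_const_mul, integral_mul_const, integral_const_mul, integral_const_mul,
      integral_const, smul_eq_mul]
    ring
  have hnonneg : 0 ≤ ∫ x, (μ.real univ * f x - ∫ y, f y ∂μ) ^ 2 ∂μ :=
    integral_nonneg fun x ↦ sq_nonneg _
  rw [expand] at hnonneg
  nlinarith [measureReal_univ_pos (μ := μ)]

theorem integral_mul_sq_le_integral_mul_sub_sq {w f : α → ℝ} (hw : 0 ≤ᵐ[μ] w)
    (hw_int : Integrable w μ) (hwf : Integrable (fun x ↦ w x * f x) μ)
    (hwf2 : Integrable (fun x ↦ w x * f x ^ 2) μ) (h_orth : ∫ x, w x * f x ∂μ = 0) (c : ℝ) :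
    ∫ x, w x * f x ^ 2 ∂μ ≤ ∫ x, w x * (f x - c) ^ 2 ∂μ := by
  have expand : ∫ x, w x * (f x - c) ^ 2 ∂μ
      = ∫ x, w x * f x ^ 2 ∂μ - 2 * c * ∫ x, w x * f x ∂μ + c ^ 2 * ∫ x, w x ∂μ := by
    have : ∀ x, w x * (f x - c) ^ 2 = w x * f x ^ 2 - 2 * c * (w x * f x) + c ^ 2 * w x :=
      fun x ↦ by ring
    simp_rw [this]
    rw [integral_add (by fun_prop) (by fun_prop), integral_sub hwf2 (by fun_prop),
      integral_const_mul, integral_const_mul]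
  rw [expand, h_orth]
  nlinarith [integral_nonneg_of_ae hw, sq_nonneg c]

variable {β : Type*} [MeasurableSpace β] {ν : Measure β} [IsFiniteMeasure μ] [IsFiniteMeasure ν]

theorem integral_fun_snd_integral {f : α × β → ℝ} (hf : Integrable f (μ.prod ν)) :
    ∫ z, (∫ x, f (x, z.2) ∂μ) ∂μ.prod ν = μ.real univ * ∫ z, f z ∂μ.prod ν := by
  rw [integral_fun_snd (fun s ↦ ∫ x, f (x, s) ∂μ), integral_prod_symm _ hf, smul_eq_mul]

theorem integral_fun_fst_integral {f : α × β → ℝ} (hf : Integrable f (μ.prod ν)) :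
    ∫ z, (∫ y, f (z.1, y) ∂ν) ∂μ.prod ν = ν.real univ * ∫ z, f z ∂μ.prod ν := by
  rw [integral_fun_fst (fun s ↦ ∫ y, f (s, y) ∂ν), integral_prod _ hf, smul_eq_mul]

end Generic

theorem Bornology.IsBounded.integrableOn_of_continuousOn_closure {X E : Type*}
    [MetricSpace X] [ProperSpace X] [MeasurableSpace X] [OpensMeasurableSpace X]
    {μ : Measure X} [IsFiniteMeasureOnCompacts μ] [NormedAddCommGroup E] {s : Set X} {f : X → E}
    (hs : Bornology.IsBounded s) (hf : ContinuousOn f (closure s)) : IntegrableOn f s μ :=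
  (hf.integrableOn_compact hs.isCompact_closure).mono_set subset_closure

open scoped Interval in
theorem sq_sub_le_mul_integral_deriv_sq {g g' : ℝ → ℝ} {a c s t : ℝ}
    (hg : ∀ u ∈ Icc a c, HasDerivAt g (g' u) u) (hg' : ContinuousOn g' (Icc a c))
    (hs : s ∈ Icc a c) (ht : t ∈ Icc a c) :
    (g s - g t) ^ 2 ≤ (c - a) * ∫ u in Ioo a c, g' u ^ 2 := by
  have hsub : uIcc t s ⊆ Icc a c := ordConnected_Icc.uIcc_subset ht hs
  have hIoc : Ι t s ⊆ Icc a c := uIoc_subset_uIcc.trans hsub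
  have ftc : ∫ u in t..s, g' u = g s - g t :=
    intervalIntegral.integral_eq_sub_of_hasDerivAt (fun u hu ↦ hg u (hsub hu))
      (hg'.mono hsub).intervalIntegrable
  have hg'_sq : IntegrableOn (fun u ↦ g' u ^ 2) (Icc a c) := (hg'.pow 2).integrableOn_Icc
  have : IsFiniteMeasure (volume.restrict (Ι t s)) := Real.isFiniteMeasure_restrict_Ioc _ _
  have hmem : MemLp g' 2 (volume.restrict (Ι t s)) :=
    (memLp_two_iff_integrable_sq (hg'.integrableOn_Icc.mono_set hIoc).aestronglyMeasurable).2
      (hg'_sq.mono_set hIoc)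
  calc (g s - g t) ^ 2 = (∫ u in Ι t s, g' u) ^ 2 := by
        rw [← ftc, ← sq_abs, intervalIntegral.abs_integral_eq_abs_integral_uIoc, sq_abs]
    _ ≤ volume.real (Ι t s) * ∫ u in Ι t s, g' u ^ 2 := by
        simpa [measureReal_restrict_apply_univ] using
          sq_integral_le_measureReal_mul_integral_sq hmem
    _ ≤ volume.real (Icc a c) * ∫ u in Icc a c, g' u ^ 2 :=
        mul_le_mul (measureReal_mono hIoc measure_Icc_lt_top.ne)
          (setIntegral_mono_set hg'_sq (.of_forall fun _ ↦ sq_nonneg _) hIoc.eventuallyLE)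
          (setIntegral_nonneg measurableSet_uIoc fun _ _ ↦ sq_nonneg _) measureReal_nonneg
    _ = (c - a) * ∫ u in Ioo a c, g' u ^ 2 := by
        rw [Real.volume_real_Icc_of_le (hs.1.trans hs.2), integral_Icc_eq_integral_Ioo]

theorem integrable_integral_sub_sq {s : Set (ℝ × ℝ)} {v : ℝ × ℝ → ℝ}
    (hs : Bornology.IsBounded s) (hv : ContinuousOn v (closure s)) :
    Integrable (fun x ↦ ∫ y in s, (v y - v x) ^ 2) (volume.restrict s) := by
  have hcont : ContinuousOn (fun z : (ℝ × ℝ) × (ℝ × ℝ) ↦ (v z.2 - v z.1) ^ 2)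
      (closure (s ×ˢ s)) := by
    rw [closure_prod_eq]
    exact ((hv.comp continuousOn_snd fun _ hz ↦ hz.2).sub
      (hv.comp continuousOn_fst fun _ hz ↦ hz.1)).pow 2
  have := (hs.prod hs).integrableOn_of_continuousOn_closure (μ := volume) hcont
  rw [IntegrableOn, Measure.volume_eq_prod, ← Measure.prod_restrict] at this
  exact this.integral_prod_left

section Square

variable {b : ℝ × ℝ} {h : ℝ} {v : ℝ × ℝ → ℝ}

theorem isBounded_sqEl : Bornology.IsBounded (sqEl b h) :=
  (Metric.isBounded_Ioo _ _).prod (Metric.isBounded_Ioo _ _)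

theorem measurableSet_sqEl : MeasurableSet (sqEl b h) :=
  measurableSet_Ioo.prod measurableSet_Ioo

theorem closure_sqEl (hh : 0 < h) :
    closure (sqEl b h) = Icc b.1 (b.1 + h) ×ˢ Icc b.2 (b.2 + h) := by
  rw [sqEl, closure_prod_eq, closure_Ioo (by linarith), closure_Ioo (by linarith)]

theorem volume_restrict_sqEl :
    volume.restrict (sqEl b h)
      = (volume.restrict (Ioo b.1 (b.1 + h))).prod (volume.restrict (Ioo b.2 (b.2 + h))) := by
  rw [sqEl, Measure.volume_eq_prod, Measure.prod_restrict]

theorem volume_real_sqEl (hh : 0 ≤ h) : volume.real (sqEl b h) = h ^ 2 := by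
  rw [sqEl, Measure.volume_eq_prod, measureReal_prod_prod,
    Real.volume_real_Ioo_of_le (by linarith), Real.volume_real_Ioo_of_le (by linarith)]
  ring

instance : IsFiniteMeasure (volume.restrict (sqEl b h)) := by
  rw [volume_restrict_sqEl]; infer_instance

theorem setIntegral_fst_mul_sq_le_mul_setIntegral_sub_sq (hb : 0 < b.1)
    (hv : ContinuousOn v (closure (sqEl b h))) (h_orth : ∫ x in sqEl b h, x.1 * v x = 0)
    (c : ℝ) :
    ∫ x in sqEl b h, x.1 * v x ^ 2 ≤ (b.1 + h) * ∫ x in sqEl b h, (v x - c) ^ 2 := by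
  have hint : ∀ f : ℝ × ℝ → ℝ, ContinuousOn f (closure (sqEl b h)) →
      Integrable f (volume.restrict (sqEl b h)) :=
    fun _ hf ↦ isBounded_sqEl.integrableOn_of_continuousOn_closure hf
  have hfst : ContinuousOn (fun x : ℝ × ℝ ↦ x.1) (closure (sqEl b h)) := continuousOn_fst
  calc _ ≤ ∫ x in sqEl b h, x.1 * (v x - c) ^ 2 :=
        integral_mul_sq_le_integral_mul_sub_sq
          ((ae_restrict_mem measurableSet_sqEl).mono fun x hx ↦ (hb.trans hx.1.1).le)
          (hint _ hfst) (hint _ (hfst.mul hv)) (hint _ (hfst.mul (hv.pow 2))) h_orth c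
    _ ≤ ∫ x in sqEl b h, (b.1 + h) * (v x - c) ^ 2 :=
        setIntegral_mono_on (hint _ (hfst.mul ((hv.sub continuousOn_const).pow 2)))
          (hint _ (continuousOn_const.mul ((hv.sub continuousOn_const).pow 2)))
          measurableSet_sqEl fun x hx ↦ mul_le_mul_of_nonneg_right hx.1.2.le (sq_nonneg _)
    _ = _ := integral_const_mul _ _

theorem mul_setIntegral_le_setIntegral_fst_mul {g : ℝ × ℝ → ℝ}
    (hg : ContinuousOn g (closure (sqEl b h))) (hg0 : ∀ x, 0 ≤ g x) :
    b.1 * ∫ x in sqEl b h, g x ≤ ∫ x in sqEl b h, x.1 * g x := by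
  rw [← integral_const_mul]
  exact setIntegral_mono_on
    (isBounded_sqEl.integrableOn_of_continuousOn_closure (continuousOn_const.mul hg))
    (isBounded_sqEl.integrableOn_of_continuousOn_closure (continuousOn_fst.mul hg))
    measurableSet_sqEl fun x hx ↦ mul_le_mul_of_nonneg_right hx.1.1.le (hg0 x)

variable (hd : ∀ x ∈ closure (sqEl b h), DifferentiableAt ℝ v x)
  (hc : ContinuousOn (fderiv ℝ v) (closure (sqEl b h)))
include hd hc

theorem sq_sub_le_integral_fderiv_fst_sq (hh : 0 < h) {t₁ t₂ s : ℝ}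
    (ht₁ : t₁ ∈ Icc b.1 (b.1 + h)) (ht₂ : t₂ ∈ Icc b.1 (b.1 + h)) (hs : s ∈ Icc b.2 (b.2 + h)) :
    (v (t₁, s) - v (t₂, s)) ^ 2 ≤ h * ∫ u in Ioo b.1 (b.1 + h), fderiv ℝ v (u, s) (1, 0) ^ 2 := by
  have hmem : MapsTo (fun u ↦ (u, s)) (Icc b.1 (b.1 + h)) (closure (sqEl b h)) :=
    fun u hu ↦ by rw [closure_sqEl hh]; exact ⟨hu, hs⟩
  simpa using sq_sub_le_mul_integral_deriv_sq
    (fun u hu ↦ (hd _ (hmem hu)).hasFDerivAt.comp_hasDerivAt u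
      ((hasDerivAt_id u).prodMk (hasDerivAt_const u s)))
    ((hc.clm_apply continuousOn_const).comp (by fun_prop) hmem) ht₁ ht₂

theorem sq_sub_le_integral_fderiv_snd_sq (hh : 0 < h) {s t₁ t₂ : ℝ}
    (hs : s ∈ Icc b.1 (b.1 + h)) (ht₁ : t₁ ∈ Icc b.2 (b.2 + h)) (ht₂ : t₂ ∈ Icc b.2 (b.2 + h)) :
    (v (s, t₁) - v (s, t₂)) ^ 2 ≤ h * ∫ u in Ioo b.2 (b.2 + h), fderiv ℝ v (s, u) (0, 1) ^ 2 := by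
  have hmem : MapsTo (fun u ↦ (s, u)) (Icc b.2 (b.2 + h)) (closure (sqEl b h)) :=
    fun u hu ↦ by rw [closure_sqEl hh]; exact ⟨hs, hu⟩
  simpa using sq_sub_le_mul_integral_deriv_sq
    (fun u hu ↦ (hd _ (hmem hu)).hasFDerivAt.comp_hasDerivAt u
      ((hasDerivAt_const u s).prodMk (hasDerivAt_id u)))
    ((hc.clm_apply continuousOn_const).comp (by fun_prop) hmem) ht₁ ht₂

theorem sq_sub_le_of_mem_sqEl (hh : 0 < h) {x y : ℝ × ℝ} (hx : x ∈ sqEl b h)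
    (hy : y ∈ sqEl b h) :
    (v y - v x) ^ 2 ≤ 2 * h * (∫ u in Ioo b.1 (b.1 + h), fderiv ℝ v (u, y.2) (1, 0) ^ 2)
      + 2 * h * ∫ u in Ioo b.2 (b.2 + h), fderiv ℝ v (x.1, u) (0, 1) ^ 2 := by
  have horiz := sq_sub_le_integral_fderiv_fst_sq hd hc hh (Ioo_subset_Icc_self hy.1)
    (Ioo_subset_Icc_self hx.1) (Ioo_subset_Icc_self hy.2)
  have vert := sq_sub_le_integral_fderiv_snd_sq hd hc hh (Ioo_subset_Icc_self hx.1)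
    (Ioo_subset_Icc_self hy.2) (Ioo_subset_Icc_self hx.2)
  nlinarith [sq_nonneg (v y - v (x.1, y.2) - (v (x.1, y.2) - v x))]

theorem integral_integral_sub_sq_le (hh : 0 < h) :
    ∫ x in sqEl b h, ∫ y in sqEl b h, (v y - v x) ^ 2
      ≤ 2 * h ^ 4 * ∫ x in sqEl b h, gradSq v x := by
  set row : ℝ → ℝ := fun s ↦ ∫ u in Ioo b.1 (b.1 + h), fderiv ℝ v (u, s) (1, 0) ^ 2
  set col : ℝ → ℝ := fun s ↦ ∫ u in Ioo b.2 (b.2 + h), fderiv ℝ v (s, u) (0, 1) ^ 2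
  have hD₁ : Integrable (fun x ↦ fderiv ℝ v x (1, 0) ^ 2) (volume.restrict (sqEl b h)) :=
    isBounded_sqEl.integrableOn_of_continuousOn_closure ((hc.clm_apply continuousOn_const).pow 2)
  have hD₂ : Integrable (fun x ↦ fderiv ℝ v x (0, 1) ^ 2) (volume.restrict (sqEl b h)) :=
    isBounded_sqEl.integrableOn_of_continuousOn_closure ((hc.clm_apply continuousOn_const).pow 2)
  have hgrad : ∫ x in sqEl b h, gradSq v x
      = (∫ x in sqEl b h, fderiv ℝ v x (1, 0) ^ 2) + ∫ x in sqEl b h, fderiv ℝ v x (0, 1) ^ 2 :=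
    integral_add hD₁ hD₂
  have hQ := volume_restrict_sqEl (b := b) (h := h)
  have hQ_real : (volume.restrict (sqEl b h)).real univ = h ^ 2 := by
    rw [measureReal_restrict_apply_univ, volume_real_sqEl hh.le]
  have hI_real : ∀ a, (volume.restrict (Ioo a (a + h))).real univ = h := fun a ↦ by
    rw [measureReal_restrict_apply_univ, Real.volume_real_Ioo_of_le (by linarith),
      add_sub_cancel_left]
  have hrow_int : Integrable (fun y ↦ row y.2) (volume.restrict (sqEl b h)) := by
    rw [hQ] at hD₁ ⊢; exact hD₁.integral_prod_right.comp_snd _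
  have hcol_int : Integrable (fun x ↦ col x.1) (volume.restrict (sqEl b h)) := by
    rw [hQ] at hD₂ ⊢; exact hD₂.integral_prod_left.comp_fst _
  have hrow : ∫ y in sqEl b h, row y.2 = h * ∫ x in sqEl b h, fderiv ℝ v x (1, 0) ^ 2 := by
    rw [hQ] at hD₁ ⊢; rw [integral_fun_snd_integral hD₁, hI_real]
  have hcol : ∫ x in sqEl b h, col x.1 = h * ∫ x in sqEl b h, fderiv ℝ v x (0, 1) ^ 2 := by
    rw [hQ] at hD₂ ⊢; rw [integral_fun_fst_integral hD₂, hI_real]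
  set G₁ := ∫ x in sqEl b h, fderiv ℝ v x (1, 0) ^ 2
  have inner : ∀ x ∈ sqEl b h,
      ∫ y in sqEl b h, (v y - v x) ^ 2 ≤ 2 * h ^ 2 * G₁ + 2 * h ^ 3 * col x.1 :=
    fun x hx ↦ calc
      _ ≤ ∫ y in sqEl b h, (2 * h * row y.2 + 2 * h * col x.1) :=
          integral_mono_of_nonneg (.of_forall fun _ ↦ sq_nonneg _)
            ((hrow_int.const_mul _).add (integrable_const _))
            ((ae_restrict_mem measurableSet_sqEl).mono fun y hy ↦
              sq_sub_le_of_mem_sqEl hd hc hh hx hy)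
      _ = _ := by
          rw [integral_add (hrow_int.const_mul _) (integrable_const _), integral_const_mul, hrow,
            integral_const, hQ_real, smul_eq_mul]
          ring
  calc _ ≤ ∫ x in sqEl b h, (2 * h ^ 2 * G₁ + 2 * h ^ 3 * col x.1) :=
        integral_mono_of_nonneg (.of_forall fun _ ↦ integral_nonneg fun _ ↦ sq_nonneg _)
          ((integrable_const _).add (hcol_int.const_mul _))
          ((ae_restrict_mem measurableSet_sqEl).mono inner)
    _ = _ := by
        rw [integral_add (integrable_const _) (hcol_int.const_mul _), integral_const, hQ_real,
          smul_eq_mul, integral_const_mul, hcol, hgrad]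
        ring

theorem setIntegral_fst_mul_sq_le (hh : 0 < h) (hb : 0 < b.1)
    (h_orth : ∫ x in sqEl b h, x.1 * v x = 0) :
    ∫ x in sqEl b h, x.1 * v x ^ 2
      ≤ 2 * ((b.1 + h) / b.1) * h ^ 2 * ∫ x in sqEl b h, x.1 * gradSq v x := by
  have hv : ContinuousOn v (closure (sqEl b h)) :=
    fun x hx ↦ (hd x hx).continuousAt.continuousWithinAt
  have hgrad : ContinuousOn (gradSq v) (closure (sqEl b h)) :=
    ((hc.clm_apply continuousOn_const).pow 2).add ((hc.clm_apply continuousOn_const).pow 2)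
  set W := ∫ x in sqEl b h, x.1 * v x ^ 2
  have h_avg : h ^ 2 * W ≤ (b.1 + h) * ∫ x in sqEl b h, ∫ y in sqEl b h, (v y - v x) ^ 2 :=
    calc h ^ 2 * W = ∫ _ in sqEl b h, W := by
          rw [integral_const, measureReal_restrict_apply_univ, volume_real_sqEl hh.le,
            smul_eq_mul]
      _ ≤ ∫ x in sqEl b h, (b.1 + h) * ∫ y in sqEl b h, (v y - v x) ^ 2 :=
          setIntegral_mono_on (integrable_const _)
            ((integrable_integral_sub_sq isBounded_sqEl hv).const_mul _) measurableSet_sqEl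
            fun x _ ↦ setIntegral_fst_mul_sq_le_mul_setIntegral_sub_sq hb hv h_orth (v x)
      _ = _ := integral_const_mul _ _
  refine le_of_mul_le_mul_left ?_ (pow_pos hh 2)
  calc h ^ 2 * W
      ≤ (b.1 + h) * (2 * h ^ 4 * ∫ x in sqEl b h, gradSq v x) := by
        grw [h_avg, integral_integral_sub_sq_le hd hc hh]
    _ = 2 * ((b.1 + h) / b.1) * h ^ 4 * (b.1 * ∫ x in sqEl b h, gradSq v x) := by
        field_simp
    _ ≤ 2 * ((b.1 + h) / b.1) * h ^ 4 * ∫ x in sqEl b h, x.1 * gradSq v x := by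
        grw [mul_setIntegral_le_setIntegral_fst_mul hgrad fun x ↦
          add_nonneg (sq_nonneg _) (sq_nonneg _)]
    _ = h ^ 2 * (2 * ((b.1 + h) / b.1) * h ^ 2 * ∫ x in sqEl b h, x.1 * gradSq v x) := by
        ring

end Square

/-- Weighted Poincaré inequality on square elements: functions orthogonal to constants
in the `r`-weighted `L²` inner product satisfy a Poincaré inequality with constant
scaling like `h²`, up to the weight ratio `(b₁+h)/b₁`. -/
theorem weighted_poincare_inequality :
    ∃ C : ℝ, 0 < C ∧ ∀ (h : ℝ), 0 < h → ∀ b : ℝ × ℝ, 0 < b.1 →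
      ∀ v : ℝ × ℝ → ℝ,
        (∃ U : Set (ℝ × ℝ), IsOpen U ∧ closure (sqEl b h) ⊆ U ∧ ContDiffOn ℝ 1 v U) →
        (∫ x in sqEl b h, x.1 * v x ∂volume) = 0 →
        (∫ x in sqEl b h, x.1 * (v x) ^ 2 ∂volume)
          ≤ C * ((b.1 + h) / b.1) * h ^ 2 *
              (∫ x in sqEl b h, x.1 * gradSq v x ∂volume) := by
  refine ⟨2, two_pos, fun h hh b hb v ⟨U, hU, hQU, hv⟩ h_orth ↦ ?_⟩
  have hd : ∀ x ∈ closure (sqEl b h), DifferentiableAt ℝ v x := fun x hx ↦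
    (hv.contDiffAt (hU.mem_nhds (hQU hx))).differentiableAt one_ne_zero
  exact setIntegral_fst_mul_sq_le hd ((hv.continuousOn_fderiv_of_isOpen hU le_rfl).mono hQU)
    hh hb h_orth
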